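/- Let (Ω, ℱ, P) be a probability space, B, K ≥ 1, S a measurable space, and for each b ∈ {1, …, B} let D_b : Ω → S be measurable and X_{b,1}, …, X_{b,K} : Ω → ℝⁿ be square-integrable random vectors. Assume: (1) the tuples Z_b := (D_b, X_{b,1}, …, X_{b,K}), b = 1, …, B, are independent and identically distributed; (2) for each b, with 𝒢_b := σ(D_b), almost everywhere E[X_{b,k} | 𝒢_b] = E[X_{b,1} | 𝒢_b] and E[‖X_{b,k}‖² | 𝒢_b] = E[‖X_{b,1}‖² | 𝒢_b] for all k, and E[⟨X_{b,j}, X_{b,k}⟩ | 𝒢_b] = ‖E[X_{b,1} | 𝒢_b]‖² for all j ≠ k. Let m = E[X_{1,1}], v = E[ E[‖X_{1,1}‖² | 𝒢₁] − ‖E[X_{1,1} | 𝒢₁]‖² ], and V = E[‖E[X_{1,1} | 𝒢₁] − m‖²]. Then E[‖(1/(BK)) Σ_{b=1}^B Σ_{k=1}^K X_{b,k} − m‖²] = v/(BK) + V/B. (This is Proposition 3 of the paper: the trace variance of the minibatched Gumbel-Rao Monte Carlo estimator decomposes as E[Var[∇_STGS | D]]/(BK) + Var[∇_GR]/B.) 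-/

import Mathlib

/-!
Write the estimator as the average of the block means `Y_b = K⁻¹ ∑ₖ X_{b,k}`. Independent blocks
with common mean `m` are uncorrelated, so the average of `B` identically distributed blocks has
variance `Var[Y_b] / B`. Inside a block only the integrated conditional hypotheses matter: by the
tower property `E⟪X_j, X_k⟫` is `s = E‖X‖²` on the diagonal and `t = E‖E[X | 𝒢]‖²` off it, whence
`Var[Y_b] = (s - t) / K + (t - ‖m‖²) = v / K + V`.
-/

open MeasureTheory ProbabilityTheory
open scoped RealInnerProductSpace

theorem inv_card_smul_sum_sub {ι 𝕜 V : Type*} [Fintype ι] [Nonempty ι] [DivisionRing 𝕜]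
    [CharZero 𝕜] [AddCommGroup V] [Module 𝕜 V] (x : ι → V) (a : V) :
    (Fintype.card ι : 𝕜)⁻¹ • ∑ i, x i - a = (Fintype.card ι : 𝕜)⁻¹ • ∑ i, (x i - a) := by
  rw [Finset.sum_sub_distrib, smul_sub, Finset.sum_const, Finset.card_univ,
    ← Nat.cast_smul_eq_nsmul 𝕜, smul_smul, inv_mul_cancel₀ (by simp), one_smul]

namespace MeasureTheory

theorem integral_inv_card_smul_sum {Ω F ι : Type*} {mΩ : MeasurableSpace Ω} {μ : Measure Ω}
    [NormedAddCommGroup F] [NormedSpace ℝ F] [Fintype ι] [Nonempty ι] {f : ι → Ω → F} {m : F}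
    (hf : ∀ i, Integrable (f i) μ) (hm : ∀ i, ∫ ω, f i ω ∂μ = m) :
    ∫ ω, (Fintype.card ι : ℝ)⁻¹ • ∑ i, f i ω ∂μ = m := by
  rw [integral_smul, integral_finsetSum _ fun i _ => hf i]
  simp_rw [hm, Finset.sum_const, Finset.card_univ]
  rw [← Nat.cast_smul_eq_nsmul ℝ, smul_smul, inv_mul_cancel₀ (by simp), one_smul]

theorem integral_eq_of_condExp_ae_eq {Ω F : Type*} {𝒢 mΩ : MeasurableSpace Ω} {μ : Measure Ω}
    [IsFiniteMeasure μ] [NormedAddCommGroup F] [NormedSpace ℝ F] [CompleteSpace F]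
    (h𝒢 : 𝒢 ≤ mΩ) {f g : Ω → F} (h : μ[f|𝒢] =ᵐ[μ] μ[g|𝒢]) :
    ∫ ω, f ω ∂μ = ∫ ω, g ω ∂μ := by
  rw [← integral_condExp h𝒢, integral_congr_ae h, integral_condExp h𝒢]

variable {Ω E : Type*} {mΩ : MeasurableSpace Ω} {μ : Measure Ω}
  [NormedAddCommGroup E] [InnerProductSpace ℝ E]

theorem MemLp.integrable_inner {f g : Ω → E} (hf : MemLp f 2 μ) (hg : MemLp g 2 μ) :
    Integrable (fun ω => ⟪f ω, g ω⟫) μ := by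
  refine (L2.integrable_inner (𝕜 := ℝ) (hf.toLp f) (hg.toLp g)).congr ?_
  filter_upwards [hf.coeFn_toLp, hg.coeFn_toLp] with ω hfω hgω
  rw [hfω, hgω]

theorem integral_norm_sum_sq {ι : Type*} [Fintype ι] {f : ι → Ω → E}
    (hf : ∀ i, MemLp (f i) 2 μ) :
    ∫ ω, ‖∑ i, f i ω‖ ^ 2 ∂μ = ∑ i, ∑ j, ∫ ω, ⟪f i ω, f j ω⟫ ∂μ := by
  simp_rw [← real_inner_self_eq_norm_sq, sum_inner, inner_sum]
  rw [integral_finsetSum _ fun i _ => integrable_finsetSum _ fun j _ =>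
    (hf i).integrable_inner (hf j)]
  exact Finset.sum_congr rfl fun i _ =>
    integral_finsetSum _ fun j _ => (hf i).integrable_inner (hf j)

variable [CompleteSpace E] [IsProbabilityMeasure μ]

theorem integral_inner_sub_of_integral_eq {f g : Ω → E} {a c : E} (hf : MemLp f 2 μ)
    (hg : MemLp g 2 μ) (hfa : ∫ ω, f ω ∂μ = a) (hgc : ∫ ω, g ω ∂μ = c) :
    ∫ ω, ⟪f ω - a, g ω - c⟫ ∂μ = ∫ ω, ⟪f ω, g ω⟫ ∂μ - ⟪a, c⟫ := by
  have hfi := hf.integrable one_le_two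
  have hgi := hg.integrable one_le_two
  have hfg := hf.integrable_inner hg
  have hfc : ∫ ω, ⟪f ω, c⟫ ∂μ = ⟪a, c⟫ := by
    simp_rw [real_inner_comm c]; rw [integral_inner hfi, hfa, real_inner_comm]
  have hag : ∫ ω, ⟪a, g ω⟫ ∂μ = ⟪a, c⟫ := by rw [integral_inner hgi, hgc]
  have hexpand : ∀ ω, ⟪f ω - a, g ω - c⟫ = ⟪f ω, g ω⟫ - ⟪f ω, c⟫ - ⟪a, g ω⟫ + ⟪a, c⟫ := by
    intro ω; simp only [inner_sub_left, inner_sub_right]; ring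
  simp_rw [hexpand]
  rw [integral_add (by fun_prop) (integrable_const _), integral_sub (by fun_prop) (by fun_prop),
    integral_sub hfg (by fun_prop), hfc, hag, integral_const, probReal_univ, one_smul]
  ring

theorem integral_norm_sub_sq_of_integral_eq {f : Ω → E} {a : E} (hf : MemLp f 2 μ)
    (hfa : ∫ ω, f ω ∂μ = a) :
    ∫ ω, ‖f ω - a‖ ^ 2 ∂μ = ∫ ω, ‖f ω‖ ^ 2 ∂μ - ‖a‖ ^ 2 := by
  simpa only [real_inner_self_eq_norm_sq] using integral_inner_sub_of_integral_eq hf hf hfa hfa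

variable {ι : Type*} [Fintype ι]

theorem integral_norm_average_sub_sq [Nonempty ι] [DecidableEq ι] {X : ι → Ω → E} {m : E}
    {s t : ℝ} (hX : ∀ i, MemLp (X i) 2 μ) (hmean : ∀ i, ∫ ω, X i ω ∂μ = m)
    (hinner : ∀ i j, ∫ ω, ⟪X i ω, X j ω⟫ ∂μ = if i = j then s else t) :
    ∫ ω, ‖(Fintype.card ι : ℝ)⁻¹ • ∑ i, X i ω - m‖ ^ 2 ∂μ
      = (s - t) / Fintype.card ι + (t - ‖m‖ ^ 2) := by
  have hcentered : ∀ i j, ∫ ω, ⟪X i ω - m, X j ω - m⟫ ∂μ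
      = (t - ‖m‖ ^ 2) + if i = j then s - t else 0 := by
    intro i j
    rw [integral_inner_sub_of_integral_eq (hX i) (hX j) (hmean i) (hmean j), hinner,
      real_inner_self_eq_norm_sq]
    split_ifs <;> ring
  simp_rw [inv_card_smul_sum_sub, norm_smul, mul_pow, norm_inv, RCLike.norm_natCast]
  rw [integral_const_mul,
    integral_norm_sum_sq (f := fun i ω => X i ω - m) fun i => (hX i).sub (memLp_const m)]
  simp_rw [hcentered, Finset.sum_add_distrib, Finset.sum_ite_eq, Finset.mem_univ, if_true,
    Finset.sum_const, Finset.card_univ, nsmul_eq_mul]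
  field_simp
  ring

theorem integral_norm_average_sub_sq_of_condExp {𝒢 : MeasurableSpace Ω} (h𝒢 : 𝒢 ≤ mΩ)
    {X : ι → Ω → E} (i₀ : ι) (hX : ∀ i, MemLp (X i) 2 μ)
    (hmean : ∀ i, μ[X i|𝒢] =ᵐ[μ] μ[X i₀|𝒢])
    (hsecond : ∀ i, μ[fun ω => ‖X i ω‖ ^ 2|𝒢] =ᵐ[μ] μ[fun ω => ‖X i₀ ω‖ ^ 2|𝒢])
    (huncorr : ∀ i j, i ≠ j →
      μ[fun ω => ⟪X i ω, X j ω⟫|𝒢] =ᵐ[μ] fun ω => ‖(μ[X i₀|𝒢]) ω‖ ^ 2) :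
    ∫ ω, ‖(Fintype.card ι : ℝ)⁻¹ • ∑ i, X i ω - ∫ ω', X i₀ ω' ∂μ‖ ^ 2 ∂μ
      = (∫ ω, ((μ[fun ω' => ‖X i₀ ω'‖ ^ 2|𝒢]) ω - ‖(μ[X i₀|𝒢]) ω‖ ^ 2) ∂μ) / Fintype.card ι
        + ∫ ω, ‖(μ[X i₀|𝒢]) ω - ∫ ω', X i₀ ω' ∂μ‖ ^ 2 ∂μ := by
  classical
  have : Nonempty ι := ⟨i₀⟩
  have hcond : MemLp (μ[X i₀|𝒢]) 2 μ := (hX i₀).condExp one_le_two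
  have hinner : ∀ i j, ∫ ω, ⟪X i ω, X j ω⟫ ∂μ = if i = j
      then ∫ ω, ‖X i₀ ω‖ ^ 2 ∂μ else ∫ ω, ‖(μ[X i₀|𝒢]) ω‖ ^ 2 ∂μ := by
    intro i j
    split_ifs with hij
    · subst hij
      simp_rw [real_inner_self_eq_norm_sq]
      exact integral_eq_of_condExp_ae_eq h𝒢 (hsecond i)
    · rw [← integral_condExp h𝒢, integral_congr_ae (huncorr i j hij)]
  rw [integral_norm_average_sub_sq hX (fun i => integral_eq_of_condExp_ae_eq h𝒢 (hmean i)) hinner,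
    integral_sub integrable_condExp ((memLp_two_iff_integrable_sq_norm hcond.1).1 hcond),
    integral_condExp h𝒢, integral_norm_sub_sq_of_integral_eq hcond (integral_condExp h𝒢)]

theorem integral_norm_average_sub_sq_of_indep [Nonempty ι] [MeasurableSpace E] [BorelSpace E]
    {Y : ι → Ω → E} {m : E} {c : ℝ} (hY : ∀ i, MemLp (Y i) 2 μ)
    (hindep : Pairwise fun i j => IndepFun (Y i) (Y j) μ) (hmean : ∀ i, ∫ ω, Y i ω ∂μ = m)
    (hvar : ∀ i, ∫ ω, ‖Y i ω - m‖ ^ 2 ∂μ = c) :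
    ∫ ω, ‖(Fintype.card ι : ℝ)⁻¹ • ∑ i, Y i ω - m‖ ^ 2 ∂μ = c / Fintype.card ι := by
  classical
  have hinner : ∀ i j, ∫ ω, ⟪Y i ω, Y j ω⟫ ∂μ = if i = j then c + ‖m‖ ^ 2 else ‖m‖ ^ 2 := by
    intro i j
    split_ifs with hij
    · subst hij
      simp_rw [real_inner_self_eq_norm_sq]
      rw [← hvar i, integral_norm_sub_sq_of_integral_eq (hY i) (hmean i)]
      ring
    · calc ∫ ω, ⟪Y i ω, Y j ω⟫ ∂μ = ⟪∫ ω, Y i ω ∂μ, ∫ ω, Y j ω ∂μ⟫ :=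
            (hindep hij).integral_bilin ((hY i).integrable one_le_two)
              ((hY j).integrable one_le_two) (innerSL ℝ)
        _ = ‖m‖ ^ 2 := by rw [hmean, hmean, real_inner_self_eq_norm_sq]
  rw [integral_norm_average_sub_sq hY hmean hinner]
  ring

end MeasureTheory

/-- **Proposition 3.** The trace variance of the minibatched Gumbel-Rao Monte Carlo estimator
decomposes as `E[Var[∇_STGS | D]]/(BK) + Var[∇_GR]/B`: if the tuples
`Z_b = (D_b, X_{b,1}, …, X_{b,K})` are i.i.d. and, conditionally on `𝒢_b = σ(D_b)`, the
`X_{b,k}` share a conditional mean and second moment and are pairwise conditionally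
uncorrelated, then
`E[‖(1/(BK)) Σ_b Σ_k X_{b,k} − m‖²] = v/(BK) + V/B`. -/
theorem minibatch_var_decomposition {Ω : Type*} {ℱ : MeasurableSpace Ω} (μ : Measure Ω)
    [IsProbabilityMeasure μ] {S : Type*} [MeasurableSpace S]
    (n B K : ℕ) (hB : 1 ≤ B) (hK : 1 ≤ K)
    (D : Fin B → Ω → S) (hD : ∀ b, Measurable (D b))
    (X : Fin B → Fin K → Ω → EuclideanSpace ℝ (Fin n))
    (hX : ∀ b k, MemLp (X b k) 2 μ)
    -- the tuples `Z_b = (D_b, X_{b,1}, …, X_{b,K})` are independent …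
    (hindep : ProbabilityTheory.iIndepFun
      (fun b : Fin B => fun ω => ((D b ω, fun k => X b k ω) :
        S × (Fin K → EuclideanSpace ℝ (Fin n)))) μ)
    -- … and identically distributed
    (hid : ∀ b, Measure.map (fun ω => ((D b ω, fun k => X b k ω) :
        S × (Fin K → EuclideanSpace ℝ (Fin n)))) μ
      = Measure.map (fun ω => ((D ⟨0, hB⟩ ω, fun k => X ⟨0, hB⟩ k ω) :
        S × (Fin K → EuclideanSpace ℝ (Fin n)))) μ)
    -- common conditional mean given `𝒢_b = σ(D_b)`
    (hmean : ∀ b k, (μ[X b k|MeasurableSpace.comap (D b) inferInstance])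
      =ᵐ[μ] (μ[X b ⟨0, hK⟩|MeasurableSpace.comap (D b) inferInstance]))
    -- common conditional second moment given `𝒢_b`
    (hsecond : ∀ b k,
      (μ[fun ω => ‖X b k ω‖ ^ 2|MeasurableSpace.comap (D b) inferInstance])
        =ᵐ[μ] (μ[fun ω => ‖X b ⟨0, hK⟩ ω‖ ^ 2|MeasurableSpace.comap (D b) inferInstance]))
    -- conditional uncorrelatedness given `𝒢_b`
    (huncorr : ∀ b, ∀ j k, j ≠ k →
      (μ[fun ω => ⟪X b j ω, X b k ω⟫|MeasurableSpace.comap (D b) inferInstance])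
        =ᵐ[μ] fun ω => ‖(μ[X b ⟨0, hK⟩|MeasurableSpace.comap (D b) inferInstance]) ω‖ ^ 2) :
    ∫ ω, ‖((B : ℝ) * (K : ℝ))⁻¹ • ∑ b, ∑ k, X b k ω - ∫ ω', X ⟨0, hB⟩ ⟨0, hK⟩ ω' ∂μ‖ ^ 2 ∂μ
      = (∫ ω, ((μ[fun ω' => ‖X ⟨0, hB⟩ ⟨0, hK⟩ ω'‖ ^ 2|
              MeasurableSpace.comap (D ⟨0, hB⟩) inferInstance]) ω
            - ‖(μ[X ⟨0, hB⟩ ⟨0, hK⟩|MeasurableSpace.comap (D ⟨0, hB⟩) inferInstance]) ω‖ ^ 2) ∂μ)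
          / ((B : ℝ) * (K : ℝ))
        + (∫ ω, ‖(μ[X ⟨0, hB⟩ ⟨0, hK⟩|MeasurableSpace.comap (D ⟨0, hB⟩) inferInstance]) ω
            - ∫ ω', X ⟨0, hB⟩ ⟨0, hK⟩ ω' ∂μ‖ ^ 2 ∂μ) / (B : ℝ) := by
  set b₀ : Fin B := ⟨0, hB⟩
  set k₀ : Fin K := ⟨0, hK⟩
  have : Nonempty (Fin B) := ⟨b₀⟩
  have : Nonempty (Fin K) := ⟨k₀⟩
  have hblock := integral_norm_average_sub_sq_of_condExp (hD b₀).comap_le k₀ (hX b₀)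
    (hmean b₀) (hsecond b₀) (huncorr b₀)
  set m := ∫ ω, X b₀ k₀ ω ∂μ
  have hZ : ∀ b, AEMeasurable (fun ω => (D b ω, fun k => X b k ω)) μ := fun b =>
    (hD b).aemeasurable.prodMk
      (aemeasurable_pi_lambda _ fun k => (hX b k).aestronglyMeasurable.aemeasurable)
  have hident : ∀ b, IdentDistrib (fun ω => (D b ω, fun k => X b k ω))
      (fun ω => (D b₀ ω, fun k => X b₀ k ω)) μ μ := fun b => ⟨hZ b, hZ b₀, hid b⟩
  have hXmean : ∀ b k, ∫ ω, X b k ω ∂μ = m := fun b k =>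
    ((hident b).comp ((measurable_pi_apply k).comp measurable_snd)).integral_eq.trans
      (integral_eq_of_condExp_ae_eq (hD b₀).comap_le (hmean b₀ k))
  set φ : S × (Fin K → EuclideanSpace ℝ (Fin n)) → EuclideanSpace ℝ (Fin n) :=
    fun p => (K : ℝ)⁻¹ • ∑ k, p.2 k
  have hφ : Measurable φ := by fun_prop
  have hbatch := integral_norm_average_sub_sq_of_indep (μ := μ)
    (Y := fun b ω => φ (D b ω, fun k => X b k ω)) (m := m)
    (c := ∫ ω, ‖(K : ℝ)⁻¹ • ∑ k, X b₀ k ω - m‖ ^ 2 ∂μ)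
    (fun b => (memLp_finsetSum _ fun k _ => hX b k).const_smul (K : ℝ)⁻¹)
    (fun b b' hbb' => (hindep.indepFun hbb').comp hφ hφ)
    (fun b => by
      simpa [φ] using integral_inv_card_smul_sum (fun k => (hX b k).integrable one_le_two)
        (hXmean b))
    (fun b => ((hident b).comp ((hφ.sub_const m).norm.pow_const 2)).integral_eq)
  simp only [Fintype.card_fin, φ] at hbatch hblock
  have hsplit : ∀ ω, ((B : ℝ) * K)⁻¹ • ∑ b, ∑ k, X b k ω
      = (B : ℝ)⁻¹ • ∑ b, (K : ℝ)⁻¹ • ∑ k, X b k ω := fun ω => by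
    rw [mul_inv, mul_smul, Finset.smul_sum]
  simp_rw [hsplit]
  rw [hbatch, hblock]
  field_simp
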